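/- arXiv:1911.12009 — 2 statements merged into one kernel-verified Lean document; each statement's English description precedes it below -/
import Mathlib

section
/- For y ∈ I_n, the involution code and the ordinary code are related by ĉ(y) = c(α_min(y)), where α_min(y) is the minimal atom of y. Here ĉ_i(y) is the number of j > i with y(i) > y(j) and i ≥ y(j), and c_i(w) = |{j : (i,j) ∈ D(w)}|. -/
open Equiv

/-- The simple transposition `s_a` of `Fin n` (swapping `a` and `a+1`, `0`-indexed);
the identity when `a` is out of range. -/
def sTr (n : ℕ) (a : ℕ) : Equiv.Perm (Fin n) :=
  if h : a + 1 < n then Equiv.swap ⟨a, Nat.lt_of_succ_lt h⟩ ⟨a + 1, h⟩ else 1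

/-- The product `s_{a_1} s_{a_2} ⋯ s_{a_l}` of the simple transpositions in a word. -/
def wordProd (n : ℕ) (l : List ℕ) : Equiv.Perm (Fin n) :=
  (l.map (sTr n)).prod

/-- A word whose letters are all valid indices of simple transpositions of `S_n`. -/
def IsWord (n : ℕ) (l : List ℕ) : Prop := ∀ a ∈ l, a + 1 < n

/-- The Coxeter length of a permutation: the minimal length of a word in the simple
transpositions expressing it. -/
noncomputable def len (n : ℕ) (w : Equiv.Perm (Fin n)) : ℕ :=
  sInf {k | ∃ l : List ℕ, IsWord n l ∧ wordProd n l = w ∧ l.length = k}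

/-- `l` is a reduced word for `w`: a minimal-length word with product `w`. -/
def IsReducedWord (n : ℕ) (l : List ℕ) (w : Equiv.Perm (Fin n)) : Prop :=
  IsWord n l ∧ wordProd n l = w ∧
    ∀ l' : List ℕ, IsWord n l' → wordProd n l' = w → l.length ≤ l'.length

/-- One step of the Demazure (0-Hecke) product: `u ∘ s_a = u s_a` if the length
increases, and `u` otherwise. -/
noncomputable def demStep (n : ℕ) (u : Equiv.Perm (Fin n)) (a : ℕ) : Equiv.Perm (Fin n) :=
  if len n (u * sTr n a) = len n u + 1 then u * sTr n a else u

/-- The Demazure product `s_{a_1} ∘ s_{a_2} ∘ ⋯ ∘ s_{a_l}` of a word. -/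
noncomputable def demWord (n : ℕ) (l : List ℕ) : Equiv.Perm (Fin n) :=
  l.foldl (demStep n) 1

/-- A choice of reduced word for each permutation. -/
noncomputable def redWord (n : ℕ) (w : Equiv.Perm (Fin n)) : List ℕ := by
  classical
  exact if h : ∃ l, IsReducedWord n l w then h.choose else []

/-- The Demazure product `v ∘ w` of two permutations: the Demazure product of the
concatenation of reduced words for `v` and for `w`. -/
noncomputable def dem (n : ℕ) (v w : Equiv.Perm (Fin n)) : Equiv.Perm (Fin n) :=
  demWord n (redWord n v ++ redWord n w)

/-- `s_{a_l} ∘ ⋯ ∘ s_{a_1} ∘ 1 ∘ s_{a_1} ∘ ⋯ ∘ s_{a_l}`, the involution-word product. -/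
noncomputable def invWordProd (n : ℕ) (l : List ℕ) : Equiv.Perm (Fin n) :=
  demWord n (l.reverse ++ l)

/-- `l` is an involution word for `y`: a minimal-length word with
`y = s_{a_l} ∘ ⋯ ∘ s_{a_1} ∘ 1 ∘ s_{a_1} ∘ ⋯ ∘ s_{a_l}`. -/
def IsInvWord (n : ℕ) (l : List ℕ) (y : Equiv.Perm (Fin n)) : Prop :=
  IsWord n l ∧ invWordProd n l = y ∧
    ∀ l' : List ℕ, IsWord n l' → invWordProd n l' = y → l.length ≤ l'.length

/-- `w` is an atom for `y`: a minimal-length permutation with `y = w⁻¹ ∘ w`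
(Demazure product). -/
def IsAtomOf (n : ℕ) (w y : Equiv.Perm (Fin n)) : Prop :=
  dem n w⁻¹ w = y ∧ ∀ v : Equiv.Perm (Fin n), dem n v⁻¹ v = y → len n w ≤ len n v

/-- The word `1, 3, 5, …, (n-1)` (in `1`-indexed terms), i.e. `0,2,4,…` `0`-indexed. -/
def fpfBase (n : ℕ) : List ℕ := (List.range (n / 2)).map (fun i => 2 * i)

/-- The minimal fixed-point-free involution `1^fpf_n = s_1 s_3 ⋯ s_{n-1}`. -/
def onefpf (n : ℕ) : Equiv.Perm (Fin n) := wordProd n (fpfBase n)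

/-- `s_{a_l} ⋯ s_{a_1} · 1^fpf_n · s_{a_1} ⋯ s_{a_l}` (ordinary products). -/
def conjWordProd (n : ℕ) (l : List ℕ) : Equiv.Perm (Fin n) :=
  wordProd n l.reverse * onefpf n * wordProd n l

/-- `l` is an fpf-involution word for `z`. -/
def IsFpfInvWord (n : ℕ) (l : List ℕ) (z : Equiv.Perm (Fin n)) : Prop :=
  IsWord n l ∧ conjWordProd n l = z ∧
    ∀ l' : List ℕ, IsWord n l' → conjWordProd n l' = z → l.length ≤ l'.length

/-- `w` is an fpf-atom for `z`: a minimal-length permutation with `z = w⁻¹ · 1^fpf_n · w`. -/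
def IsFpfAtomOf (n : ℕ) (w z : Equiv.Perm (Fin n)) : Prop :=
  w⁻¹ * onefpf n * w = z ∧
    ∀ v : Equiv.Perm (Fin n), v⁻¹ * onefpf n * v = z → len n w ≤ len n v

/-- Bruhat order on `S_n`: generated by `u < u t` for transpositions `t` that
increase length. -/
def BruhatLE (n : ℕ) (u w : Equiv.Perm (Fin n)) : Prop :=
  Relation.ReflTransGen
    (fun x y => len n x < len n y ∧ ∃ t : Equiv.Perm (Fin n), Equiv.Perm.IsSwap t ∧ y = x * t)
    u w

/-- The Rothe diagram `D(w) = {(i,j) : w(i) > j, w⁻¹(j) > i}` (`0`-indexed). -/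
def rothe (n : ℕ) (w : Equiv.Perm (Fin n)) : Finset (Fin n × Fin n) :=
  Finset.univ.filter (fun p => p.2 < w p.1 ∧ p.1 < w⁻¹ p.2)

/-- The number of inversions of a permutation. -/
def invNum (n : ℕ) (w : Equiv.Perm (Fin n)) : ℕ :=
  (Finset.univ.filter (fun p : Fin n × Fin n => p.1 < p.2 ∧ w p.2 < w p.1)).card

/-- The transpose of a finite diagram. -/
def trFinset (n : ℕ) (D : Finset (Fin n × Fin n)) : Finset (Fin n × Fin n) :=
  D.image (fun p => (p.2, p.1))

/-- The transpose of a diagram (as a set). -/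
def trSet {n : ℕ} (D : Set (Fin n × Fin n)) : Set (Fin n × Fin n) :=
  {p | (p.2, p.1) ∈ D}

/-- The northwest partial order: `(i,j) ≤ (i',j')` iff `i ≤ i'` and `j ≤ j'`. -/
def NWle {n : ℕ} (p q : Fin n × Fin n) : Prop := p.1 ≤ q.1 ∧ p.2 ≤ q.2

/-- A lower set for the northwest order (i.e., a Ferrers/partition diagram). -/
def IsLowerNW {n : ℕ} (S : Set (Fin n × Fin n)) : Prop :=
  ∀ p q : Fin n × Fin n, NWle p q → q ∈ S → p ∈ S

/-- The dominant component of a diagram: the union of all `≤_NW`-lower sets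
contained in it. -/
def domComp {n : ℕ} (D : Set (Fin n × Fin n)) : Set (Fin n × Fin n) :=
  ⋃₀ {S | IsLowerNW S ∧ S ⊆ D}

/-- The Lehmer code `c_i(w)`: the number of cells of the Rothe diagram in row `i`. -/
def code (n : ℕ) (w : Equiv.Perm (Fin n)) (i : Fin n) : ℕ :=
  (Finset.univ.filter (fun j : Fin n => (i, j) ∈ rothe n w)).card

/-- The involution code `ĉ_i(y)`: the number of `j > i` with `y(i) > y(j)` and
`i ≥ y(j)` (`0`-indexed translation of the `1`-indexed definition). -/
def invCode (n : ℕ) (y : Equiv.Perm (Fin n)) (i : Fin n) : ℕ :=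
  (Finset.univ.filter (fun j : Fin n => i < j ∧ y j < y i ∧ y j ≤ i)).card

/-- The fpf-involution code `ĉ^fpf_i(z)`: the number of `j > i` with `z(i) > z(j)`
and `i > z(j)`. -/
def fpfInvCode (n : ℕ) (z : Equiv.Perm (Fin n)) (i : Fin n) : ℕ :=
  (Finset.univ.filter (fun j : Fin n => i < j ∧ z j < z i ∧ z j < i)).card

/-- The word `b_1 a_1 b_2 a_2 ⋯ b_l a_l` with repeated letters removed, where
`a_1 < ⋯ < a_l` are the `a` with `a ≤ y(a)` and `b_i = y(a_i)`; this is the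
one-line notation of `α_min(y)⁻¹`. -/
def amWord (n : ℕ) (y : Equiv.Perm (Fin n)) : List (Fin n) :=
  (((List.finRange n).filter (fun a => a ≤ y a)).flatMap (fun a => [y a, a])).dedup

/-- The standard reading word of a diagram: read rows top to bottom, each row right
to left, recording the (`0`-indexed) antidiagonal index `i+j` of each cell. -/
def readWord (n : ℕ) (D : Finset (Fin n × Fin n)) : List ℕ :=
  (List.finRange n).flatMap (fun i =>
    ((List.finRange n).reverse.filter (fun j => (i, j) ∈ D)).map
      (fun j => (i : ℕ) + (j : ℕ)))

/-- `D` is a reduced pipe dream for `w`: a subset of the staircase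
`{(i,j) : i + j ≤ n}` (`1`-indexed) whose standard reading word is a reduced word
for `w`. -/
def IsPipeDream (n : ℕ) (D : Finset (Fin n × Fin n)) (w : Equiv.Perm (Fin n)) : Prop :=
  (∀ p ∈ D, (p.1 : ℕ) + (p.2 : ℕ) + 2 ≤ n) ∧ IsReducedWord n (readWord n D) w


/-- Auxiliary: `min(x, y x)` as a natural number. -/
def amMin (n : ℕ) (y : Equiv.Perm (Fin n)) (x : Fin n) : ℕ := min (x : ℕ) ((y x : Fin n) : ℕ)

/-- Strict "appears before" relation for `amWord`. -/
def amR (n : ℕ) (y : Equiv.Perm (Fin n)) (x z : Fin n) : Prop :=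
  amMin n y x < amMin n y z ∨ (amMin n y x = amMin n y z ∧ (z : ℕ) < (x : ℕ))

/-- Weak "appears before" relation for the pre-dedup word. -/
def amR' (n : ℕ) (y : Equiv.Perm (Fin n)) (x z : Fin n) : Prop :=
  amMin n y x < amMin n y z ∨ (amMin n y x = amMin n y z ∧ (z : ℕ) ≤ (x : ℕ))

/-- The involution code of `y` equals the Lehmer code of the minimal atom
`α_min(y)`, the permutation whose inverse has one-line notation obtained by removing
repeated letters from `b_1 a_1 b_2 a_2 ⋯ b_l a_l`. -/
theorem invCode_eq_code_of_minimal_atom (n : ℕ) (y v : Equiv.Perm (Fin n))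
    (hy : y⁻¹ = y)
    (hv : List.ofFn (fun k : Fin n => v⁻¹ k) = amWord n y) :
    ∀ i : Fin n, invCode n y i = code n v i := by
  classical
  have yy : ∀ x : Fin n, y (y x) = x := by
    intro x; nth_rewrite 1 [← hy]; exact y.symm_apply_apply x
  have hMa : ∀ a : Fin n, a ≤ y a → amMin n y a = (a : ℕ) := by
    intro a ha
    simp only [amMin]
    exact min_eq_left ha
  have hMb : ∀ a : Fin n, a ≤ y a → amMin n y (y a) = (a : ℕ) := by
    intro a ha
    simp only [amMin, yy a]
    exact min_eq_right ha
  -- the pre-dedup word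
  set L : List (Fin n) :=
    ((List.finRange n).filter (fun a => a ≤ y a)).flatMap (fun a => [y a, a]) with hL
  have hmemF : ∀ a ∈ (List.finRange n).filter (fun a => a ≤ y a), a ≤ y a := by
    intro a ha
    have := List.of_mem_filter ha
    simpa using this
  have h1 : L.Pairwise (amR' n y) := by
    rw [hL, List.pairwise_flatMap]
    constructor
    · intro a ha
      have hay := hmemF a ha
      refine List.pairwise_cons.2 ⟨?_, ?_⟩
      · intro z hz
        have hz' : z = a := by simpa using hz
        rw [hz']
        right
        exact ⟨(hMb a hay).trans (hMa a hay).symm, hay⟩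
      · simp
    · have hlt := List.pairwise_lt_finRange n
      have hlt' := hlt.filter (fun a => decide (a ≤ y a))
      refine hlt'.imp_of_mem ?_
      intro a b ha hb hab
      have hay := hmemF a ha
      have hby := hmemF b hb
      intro x hx z hz
      have hx' : amMin n y x = (a : ℕ) := by
        rcases (by simpa using hx : x = y a ∨ x = a) with h | h <;> rw [h]
        · exact hMb a hay
        · exact hMa a hay
      have hz' : amMin n y z = (b : ℕ) := by
        rcases (by simpa using hz : z = y b ∨ z = b) with h | h <;> rw [h]
        · exact hMb b hby
        · exact hMa b hby
      left
      rw [hx', hz']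
      exact hab
  have hsor : (amWord n y).Pairwise (amR n y) := by
    have h2 : (L.dedup).Pairwise (amR' n y) := h1.sublist (List.dedup_sublist L)
    have h3 : (L.dedup).Pairwise (· ≠ ·) := List.nodup_dedup L
    have h4 := h2.and h3
    have : amWord n y = L.dedup := rfl
    rw [this]
    refine h4.imp ?_
    rintro x z ⟨hr, hne⟩
    rcases hr with h | ⟨h, h'⟩
    · exact Or.inl h
    · right
      refine ⟨h, lt_of_le_of_ne h' ?_⟩
      exact fun e => hne (Fin.ext e.symm)
  have hs : ∀ ⦃p q : Fin n⦄, p < q → amR n y (v⁻¹ p) (v⁻¹ q) := by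
    rw [← hv] at hsor
    exact List.pairwise_ofFn.mp hsor
  have hP : ∀ k i : Fin n, v k < v i ↔ amR n y k i := by
    intro k i
    constructor
    · intro h
      have := hs h
      simpa using this
    · intro hr
      rcases lt_trichotomy (v k) (v i) with h | h | h
      · exact h
      · exfalso
        have hk : k = i := v.injective h
        subst hk
        rcases hr with h | ⟨_, h⟩ <;> omega
      · exfalso
        have h2 := hs h
        simp only [Equiv.Perm.coe_inv, Equiv.symm_apply_apply] at h2
        rcases hr with h1 | ⟨h1, h1'⟩ <;> rcases h2 with h2 | ⟨h2, h2'⟩ <;> omega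
  intro i
  have hcode : code n v i = (Finset.univ.filter (fun k : Fin n => i < k ∧ v k < v i)).card := by
    rw [code]
    apply Finset.card_bij' (fun j _ => v⁻¹ j) (fun k _ => v k)
    · intro j hj
      simp only [rothe, Finset.mem_filter, Finset.mem_univ, true_and] at hj
      simp only [Finset.mem_filter, Finset.mem_univ, true_and]
      exact ⟨hj.2, by simpa using hj.1⟩
    · intro k hk
      simp only [Finset.mem_filter, Finset.mem_univ, true_and] at hk
      simp only [rothe, Finset.mem_filter, Finset.mem_univ, true_and]
      exact ⟨hk.2, by simpa using hk.1⟩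
    · intro j _; simp
    · intro k _; simp
  rw [invCode, hcode]
  congr 1
  apply Finset.filter_congr
  intro k _
  rw [hP k i]
  have h1 : ((y k : Fin n) : ℕ) = (i : ℕ) → (k : ℕ) = ((y i : Fin n) : ℕ) := by
    intro h
    have h' : y k = i := Fin.ext h
    have := congrArg y h'
    rw [yy] at this
    exact congrArg Fin.val this
  have h2 : ((y k : Fin n) : ℕ) = ((y i : Fin n) : ℕ) → (k : ℕ) = (i : ℕ) := by
    intro h
    exact congrArg Fin.val (y.injective (Fin.ext h))
  simp only [amR, amMin, Fin.lt_def, Fin.le_def]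
  constructor
  · rintro ⟨hik, hr⟩
    refine ⟨hik, ?_⟩
    omega
  · rintro ⟨hik, hr⟩
    refine ⟨hik, ?_⟩
    omega
end

section
/- Let z ∈ I_n be an involution with a reduced pipe dream D that is symmetric (D = D^T), where n is even. Then z is fixed-point-free if and only if D contains all diagonal cells (i,i) for i ∈ [n/2]. -/
open Equiv

theorem Equiv.Perm.inv_apply_self {α : Type*} (f : Equiv.Perm α) (x : α) : f⁻¹ (f x) = x :=
  Equiv.symm_apply_apply f x

theorem Equiv.Perm.apply_inv_self {α : Type*} (f : Equiv.Perm α) (x : α) : f (f⁻¹ x) = x :=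
  Equiv.apply_symm_apply f x

theorem List.map_coe_finRange (n : ℕ) : (List.finRange n).map (↑) = List.range n :=
  List.ext_getElem (by simp) (by simp)

namespace PDproof

/-- adjacent transposition on ℕ -/
def sN (a : ℕ) : Equiv.Perm ℕ := Equiv.swap a (a+1)

/-- product of a word of adjacent transpositions, on ℕ -/
def wp (l : List ℕ) : Equiv.Perm ℕ := (l.map sN).prod

@[simp] lemma wp_nil : wp [] = 1 := rfl

@[simp] lemma wp_cons (a : ℕ) (l : List ℕ) : wp (a :: l) = sN a * wp l := by
  simp [wp, List.prod_cons]

@[simp] lemma wp_append (l₁ l₂ : List ℕ) : wp (l₁ ++ l₂) = wp l₁ * wp l₂ := by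
  simp [wp]

@[simp] lemma wp_singleton (a : ℕ) : wp [a] = sN a := by simp

lemma sN_mul_self (a : ℕ) : sN a * sN a = 1 := Equiv.swap_mul_self _ _

lemma sN_apply_of_ne (a x : ℕ) (h1 : x ≠ a) (h2 : x ≠ a+1) : sN a x = x :=
  Equiv.swap_apply_of_ne_of_ne h1 h2

lemma wp_apply_of_fix (l : List ℕ) (x : ℕ) (h : ∀ a ∈ l, x ≠ a ∧ x ≠ a+1) :
    wp l x = x := by
  induction l with
  | nil => rfl
  | cons a l ih =>
    have hx := h a (by simp)
    simp only [wp_cons, Equiv.Perm.mul_apply]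
    rw [ih (fun b hb => h b (by simp [hb])), sN_apply_of_ne a x hx.1 hx.2]

lemma sN_apply_lt {n a x : ℕ} (ha : a + 1 < n) (hx : x < n) : sN a x < n := by
  rcases eq_or_ne x a with rfl | h1
  · rw [sN, Equiv.swap_apply_left]; exact ha
  rcases eq_or_ne x (a+1) with rfl | h2
  · rw [sN, Equiv.swap_apply_right]; omega
  · rw [sN_apply_of_ne a x h1 h2]; exact hx

lemma wp_apply_lt {n : ℕ} (l : List ℕ) (h : ∀ a ∈ l, a + 1 < n) (x : ℕ) (hx : x < n) :
    wp l x < n := by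
  induction l with
  | nil => exact hx
  | cons a l ih =>
    simp only [wp_cons, Equiv.Perm.mul_apply]
    exact sN_apply_lt (h a (by simp)) (ih (fun b hb => h b (by simp [hb])))

lemma sTr_val (n a : ℕ) (ha : a + 1 < n) (y : Fin n) :
    ((sTr n a y : Fin n) : ℕ) = sN a (y : ℕ) := by
  rw [sTr, dif_pos ha, sN]
  by_cases h1 : (y : ℕ) = a
  · have : y = ⟨a, Nat.lt_of_succ_lt ha⟩ := Fin.ext h1
    rw [this, Equiv.swap_apply_left]
    simp [h1, Equiv.swap_apply_left]
  by_cases h2 : (y : ℕ) = a + 1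
  · have : y = ⟨a+1, ha⟩ := Fin.ext h2
    rw [this, Equiv.swap_apply_right]
    simp [h2, Equiv.swap_apply_right]
  · rw [Equiv.swap_apply_of_ne_of_ne (fun hc => h1 (by rw [hc])) (fun hc => h2 (by rw [hc])),
      Equiv.swap_apply_of_ne_of_ne h1 h2]

/-- agreement between `wordProd` on `Fin n` and `wp` on `ℕ` -/
lemma wordProd_apply_eq_wp (n : ℕ) (l : List ℕ) (hl : ∀ a ∈ l, a + 1 < n) (x : Fin n) :
    ((wordProd n l x : Fin n) : ℕ) = wp l (x : ℕ) := by
  induction l with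
  | nil => simp [wordProd, wp]
  | cons a l ih =>
    have ha := hl a (by simp)
    have hrest : ∀ b ∈ l, b + 1 < n := fun b hb => hl b (by simp [hb])
    have hw : wordProd n (a :: l) = sTr n a * wordProd n l := by
      simp [wordProd, List.prod_cons]
    rw [hw]
    simp only [Equiv.Perm.mul_apply, wp_cons]
    rw [← ih hrest, sTr_val n a ha]

lemma wordProd_eq_of_wp_eq (n : ℕ) (l₁ l₂ : List ℕ) (h1 : ∀ a ∈ l₁, a + 1 < n)
    (h2 : ∀ a ∈ l₂, a + 1 < n) (h : wp l₁ = wp l₂) :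
    wordProd n l₁ = wordProd n l₂ := by
  apply Equiv.ext; intro x
  apply Fin.ext
  rw [wordProd_apply_eq_wp n l₁ h1 x, wordProd_apply_eq_wp n l₂ h2 x, h]

lemma swap_eq_swap_iff' {a b c d : ℕ} (hab : a ≠ b) (h : Equiv.swap a b = Equiv.swap c d) :
    (a = c ∧ b = d) ∨ (a = d ∧ b = c) := by
  have h1 : Equiv.swap c d a = b := by rw [← h, Equiv.swap_apply_left]
  rcases eq_or_ne a c with rfl | hac
  · left; constructor; rfl
    rw [Equiv.swap_apply_left] at h1; omega
  rcases eq_or_ne a d with rfl | had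
  · right; constructor; rfl
    rw [Equiv.swap_apply_right] at h1; omega
  · rw [Equiv.swap_apply_of_ne_of_ne hac had] at h1
    exact absurd h1 hab

end PDproof
namespace PDproof

/-- columns `< k` with `mm` true, in decreasing order -/
def rowL (mm : ℕ → Bool) : ℕ → List ℕ
  | 0 => []
  | k+1 => (if mm k then [k] else []) ++ rowL mm k

/-- columns in `(j, k)` with `mm` true, in decreasing order -/
def rowGT (mm : ℕ → Bool) (j : ℕ) : ℕ → List ℕ
  | 0 => []
  | k+1 => (if j < k ∧ mm k then [k] else []) ++ rowGT mm j k

lemma rowL_mem {mm : ℕ → Bool} {k c : ℕ} (h : c ∈ rowL mm k) : c < k ∧ mm c = true := by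
  induction k with
  | zero => simp [rowL] at h
  | succ k ih =>
    rw [rowL] at h
    rcases List.mem_append.mp h with h' | h'
    · by_cases hk : mm k
      · simp [hk] at h'; subst h'; exact ⟨Nat.lt_succ_self _, hk⟩
      · simp [hk] at h'
    · have := ih h'
      exact ⟨Nat.lt_succ_of_lt this.1, this.2⟩

lemma rowGT_mem {mm : ℕ → Bool} {j k c : ℕ} (h : c ∈ rowGT mm j k) :
    j < c ∧ c < k ∧ mm c = true := by
  induction k with
  | zero => simp [rowGT] at h
  | succ k ih =>
    rw [rowGT] at h
    rcases List.mem_append.mp h with h' | h'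
    · by_cases hk : j < k ∧ mm k
      · simp only [if_pos hk, List.mem_singleton] at h'
        subst h'; exact ⟨hk.1, Nat.lt_succ_self _, hk.2⟩
      · simp [if_neg hk] at h'
    · have := ih h'
      exact ⟨this.1, Nat.lt_succ_of_lt this.2.1, this.2.2⟩

lemma rowGT_nil {mm : ℕ → Bool} {j k : ℕ} (h : k ≤ j) : rowGT mm j k = [] := by
  induction k with
  | zero => rfl
  | succ k ih =>
    rw [rowGT, if_neg (fun hc : j < k ∧ mm k = true => absurd hc.1 (by omega)),
      ih (by omega)]
    rfl

lemma rowL_split {mm : ℕ → Bool} {j k : ℕ} (h : j < k) :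
    rowL mm k = rowGT mm j k ++ rowL mm (j+1) := by
  induction k with
  | zero => omega
  | succ k ih =>
    rcases eq_or_lt_of_le (Nat.lt_succ_iff.mp h) with rfl | hjk
    · rw [rowGT, if_neg (fun hc : j < j ∧ mm j = true => absurd hc.1 (by omega)),
        rowGT_nil (le_refl j)]
      rfl
    · rw [rowL, rowGT, ih hjk, List.append_assoc]
      congr 1
      by_cases hk : mm k = true
      · rw [if_pos hk, if_pos ⟨hjk, hk⟩]
      · rw [if_neg hk, if_neg (by tauto)]

lemma rowGT_split {mm : ℕ → Bool} {j k : ℕ} (h : j + 1 < k) :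
    rowGT mm j k = rowGT mm (j+1) k ++ (if mm (j+1) then [j+1] else []) := by
  induction k with
  | zero => omega
  | succ k ih =>
    rcases eq_or_lt_of_le (Nat.lt_succ_iff.mp h) with hk | hjk
    · subst hk
      simp only [rowGT]
      rw [rowGT_nil (le_refl j), rowGT_nil (Nat.le_succ j),
        if_neg (fun hc : j + 1 < j + 1 ∧ mm (j+1) = true => absurd hc.1 (by omega)),
        if_neg (fun hc : j + 1 < j ∧ mm j = true => absurd hc.1 (by omega)),
        if_neg (fun hc : j < j ∧ mm j = true => absurd hc.1 (by omega))]
      by_cases hj : mm (j+1) = true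
      · rw [if_pos ⟨Nat.lt_succ_self j, hj⟩, if_pos hj]; rfl
      · rw [if_neg (by tauto), if_neg hj]; rfl
    · rw [rowGT, rowGT, ih hjk, List.append_assoc]
      congr 1
      by_cases hk : mm k = true
      · rw [if_pos ⟨by omega, hk⟩, if_pos ⟨by omega, hk⟩]
      · rw [if_neg (by tauto), if_neg (by tauto)]

lemma rowGT_split_gen {mm : ℕ → Bool} {j' j k : ℕ} (h1 : j' < j) (h2 : j < k)
    (hm : mm j = true) : ∃ mid, rowGT mm j' k = rowGT mm j k ++ j :: mid := by
  induction k with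
  | zero => omega
  | succ k ih =>
    rcases eq_or_lt_of_le (Nat.lt_succ_iff.mp h2) with rfl | hjk
    · refine ⟨rowGT mm j' j, ?_⟩
      rw [rowGT, if_pos ⟨h1, hm⟩, rowGT,
        if_neg (fun hc : j < j ∧ mm j = true => absurd hc.1 (by omega)),
        rowGT_nil (le_refl j)]
      rfl
    · obtain ⟨mid, hmid⟩ := ih hjk
      refine ⟨mid, ?_⟩
      rw [rowGT, rowGT, hmid, List.append_assoc]
      congr 1
      by_cases hk : mm k = true
      · rw [if_pos ⟨by omega, hk⟩, if_pos ⟨by omega, hk⟩]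
      · rw [if_neg (by tauto), if_neg (by tauto)]

end PDproof
namespace PDproof

variable (m : ℕ → ℕ → Bool) (n : ℕ)

/-- the letters of row `i`, read right to left -/
def rowW (i : ℕ) : List ℕ := (rowL (m i) n).map (i + ·)

/-- the reading word of the diagram `m` -/
def wordD : List ℕ := (List.range n).flatMap (rowW m n)

/-- the reading word strictly before cell `(i,j)` -/
def prefW (i j : ℕ) : List ℕ :=
  (List.range i).flatMap (rowW m n) ++ (rowGT (m i) j n).map (i + ·)

/-- the reading word strictly after cell `(i,j)` -/
def suffW (i j : ℕ) : List ℕ :=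
  (rowL (m i) j).map (i + ·) ++ ((List.range (n - (i+1))).map ((i+1) + ·)).flatMap (rowW m n)

/-- the reading word after row `i` -/
def restW (i : ℕ) : List ℕ :=
  ((List.range (n - (i+1))).map ((i+1) + ·)).flatMap (rowW m n)

lemma range_flatMap_split (f : ℕ → List ℕ) {i : ℕ} (hi : i < n) :
    (List.range n).flatMap f
      = (List.range i).flatMap f ++ f i ++ ((List.range (n - (i+1))).map ((i+1) + ·)).flatMap f := by
  have h1 : n = (i+1) + (n - (i+1)) := by omega
  conv_lhs => rw [h1]
  rw [List.range_add, List.flatMap_append, List.range_succ, List.flatMap_append]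
  simp [List.append_assoc]

lemma if_map (c : Prop) [Decidable c] (j : ℕ) (f : ℕ → ℕ) :
    (if c then [j] else []).map f = if c then [f j] else [] := by
  by_cases h : c <;> simp [h]

lemma word_decomp {i j : ℕ} (hm : m i j = true) (hi : i < n) (hj : j < n) :
    wordD m n = prefW m n i j ++ (i+j) :: suffW m n i j := by
  rw [wordD, range_flatMap_split n (rowW m n) hi]
  have hrow : rowW m n i = (rowGT (m i) j n).map (i + ·) ++ ((i+j) :: (rowL (m i) j).map (i + ·)) := by
    rw [rowW, rowL_split hj, List.map_append, rowL, List.map_append, if_map, if_pos hm]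
    simp
  rw [hrow, prefW, suffW]
  simp [List.append_assoc]

lemma prefW_succ {i j : ℕ} (h : j + 1 < n) :
    prefW m n i j = prefW m n i (j+1) ++ (if m i (j+1) then [i+(j+1)] else []) := by
  rw [prefW, prefW, rowGT_split h, List.map_append, if_map, List.append_assoc]

lemma prefW_row {i j : ℕ} (hj : j < n) :
    prefW m n (i+1) j = (prefW m n i j ++ (if m i j then [i+j] else []))
      ++ ((rowL (m i) j).map (i + ·) ++ (rowGT (m (i+1)) j n).map ((i+1) + ·)) := by
  rw [prefW, prefW, List.range_succ, List.flatMap_append,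
    List.flatMap_cons, List.flatMap_nil, List.append_nil]
  have hrow : rowW m n i = (rowGT (m i) j n).map (i + ·)
      ++ ((if m i j then [i+j] else []) ++ (rowL (m i) j).map (i + ·)) := by
    rw [rowW, rowL_split hj, List.map_append, rowL, List.map_append, if_map]
  rw [hrow]
  simp [List.append_assoc]

lemma word_row0 {i : ℕ} (hi : i < n) :
    wordD m n = (prefW m n i 0 ++ (if m i 0 then [i+0] else [])) ++ restW m n i := by
  rw [wordD, range_flatMap_split n (rowW m n) hi, prefW, restW]
  have hrow : rowW m n i = (rowGT (m i) 0 n).map (i + ·) ++ (if m i 0 then [i+0] else []) := by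
    rw [rowW, rowL_split (show 0 < n by omega), List.map_append, rowL, List.map_append, if_map]
    simp [rowL]
  rw [hrow]
  simp [List.append_assoc]

lemma mem_rowW {i a : ℕ} (h : a ∈ rowW m n i) : ∃ j, j < n ∧ m i j = true ∧ a = i + j := by
  rw [rowW] at h
  obtain ⟨j, hj, rfl⟩ := List.mem_map.mp h
  exact ⟨j, (rowL_mem hj).1, (rowL_mem hj).2, rfl⟩

lemma mem_wordD {a : ℕ} (h : a ∈ wordD m n) : ∃ i j, m i j = true ∧ a = i + j := by
  rw [wordD] at h
  obtain ⟨i, _, hi2⟩ := List.mem_flatMap.mp h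
  obtain ⟨j, _, hm, rfl⟩ := mem_rowW m n hi2
  exact ⟨i, j, hm, rfl⟩

lemma mem_prefW {i j a : ℕ} (h : a ∈ prefW m n i j) : ∃ r c, m r c = true ∧ a = r + c := by
  rw [prefW] at h
  rcases List.mem_append.mp h with h' | h'
  · obtain ⟨r, _, hr2⟩ := List.mem_flatMap.mp h'
    obtain ⟨c, _, hm, rfl⟩ := mem_rowW m n hr2
    exact ⟨r, c, hm, rfl⟩
  · obtain ⟨c, hc, rfl⟩ := List.mem_map.mp h'
    exact ⟨i, c, (rowGT_mem hc).2.2, rfl⟩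

lemma mem_restW {i a : ℕ} (h : a ∈ restW m n i) :
    ∃ r c, i + 1 ≤ r ∧ m r c = true ∧ a = r + c := by
  rw [restW] at h
  obtain ⟨r, hr1, hr2⟩ := List.mem_flatMap.mp h
  obtain ⟨t, _, rfl⟩ := List.mem_map.mp hr1
  obtain ⟨c, _, hm, rfl⟩ := mem_rowW m n hr2
  exact ⟨(i+1)+t, c, by omega, hm, rfl⟩

section Labels

/-- prefix permutation at cell `(i,j)` -/
noncomputable def qP (i j : ℕ) : Equiv.Perm ℕ := wp (prefW m n i j)

/-- permutation after processing cell `(i,j)` -/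
noncomputable def qP' (i j : ℕ) : Equiv.Perm ℕ :=
  qP m n i j * (if m i j then sN (i+j) else 1)

noncomputable def nl (i j : ℕ) : ℕ := qP m n i j (i+j)
noncomputable def el (i j : ℕ) : ℕ := qP m n i j (i+j+1)
noncomputable def wl (i j : ℕ) : ℕ := qP' m n i j (i+j)
noncomputable def sl (i j : ℕ) : ℕ := qP' m n i j (i+j+1)

lemma cross_wl {i j : ℕ} (h : m i j = true) : wl m n i j = el m n i j := by
  rw [wl, el, qP', if_pos h, Equiv.Perm.mul_apply, sN, Equiv.swap_apply_left]

lemma cross_sl {i j : ℕ} (h : m i j = true) : sl m n i j = nl m n i j := by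
  rw [sl, nl, qP', if_pos h, Equiv.Perm.mul_apply, sN, Equiv.swap_apply_right]

lemma elbow_wl {i j : ℕ} (h : m i j = false) : wl m n i j = nl m n i j := by
  rw [wl, nl, qP', if_neg (by simp [h]), mul_one]

lemma elbow_sl {i j : ℕ} (h : m i j = false) : sl m n i j = el m n i j := by
  rw [sl, el, qP', if_neg (by simp [h]), mul_one]

lemma wp_if (c : Prop) [Decidable c] (a : ℕ) :
    wp (if c then [a] else []) = if c then sN a else 1 := by
  by_cases h : c <;> simp [h]

lemma G1 {i j : ℕ} (h : j + 1 < n) : qP m n i j = qP' m n i (j+1) := by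
  rw [qP, prefW_succ m n h, wp_append, wp_if, qP', qP]

lemma el_eq_wl_succ {i j : ℕ} (h : j + 1 < n) : el m n i j = wl m n i (j+1) := by
  rw [el, wl, G1 m n h, Nat.add_assoc]

lemma G2 {i j : ℕ} (hj : j < n) : nl m n (i+1) j = sl m n i j := by
  have hq : qP m n (i+1) j = qP' m n i j
      * wp ((rowL (m i) j).map (i + ·) ++ (rowGT (m (i+1)) j n).map ((i+1) + ·)) := by
    rw [qP, prefW_row m n hj, wp_append, wp_append, wp_if, qP', qP]
  rw [nl, sl, hq, Equiv.Perm.mul_apply]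
  congr 1
  have : (i+1) + j = i + j + 1 := by omega
  rw [this]
  apply wp_apply_of_fix
  intro a ha
  rcases List.mem_append.mp ha with h' | h'
  · obtain ⟨c, hc, rfl⟩ := List.mem_map.mp h'
    have := (rowL_mem hc).1
    omega
  · obtain ⟨c, hc, rfl⟩ := List.mem_map.mp h'
    have := (rowGT_mem hc).1
    omega

lemma nl_top {j : ℕ} : nl m n 0 j = j := by
  rw [nl, qP, prefW]
  simp only [List.range_zero, List.flatMap_nil, List.nil_append, Nat.zero_add]
  apply wp_apply_of_fix
  intro a ha
  obtain ⟨c, hc, rfl⟩ := List.mem_map.mp ha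
  have := (rowGT_mem hc).1
  omega

variable (Hm : ∀ a b, m a b = true → a + b + 2 ≤ n)

include Hm

lemma qP_fix_ge {i j x : ℕ} (hx : n ≤ x) : qP m n i j x = x := by
  rw [qP]
  apply wp_apply_of_fix
  intro a ha
  obtain ⟨r, c, hm, rfl⟩ := mem_prefW m n ha
  have := Hm r c hm
  omega

lemma qP'_fix_ge {i j x : ℕ} (hx : n ≤ x) : qP' m n i j x = x := by
  rw [qP']
  by_cases h : m i j = true
  · rw [if_pos h, Equiv.Perm.mul_apply]
    have hb := Hm i j h
    rw [sN_apply_of_ne _ _ (by omega) (by omega)]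
    exact qP_fix_ge m n Hm hx
  · rw [if_neg (by simp [h]), mul_one]
    exact qP_fix_ge m n Hm hx

lemma el_east {i : ℕ} (hn : 1 ≤ n) : el m n i (n-1) = i + n := by
  rw [el]
  have h1 : i + (n-1) + 1 = i + n := by omega
  rw [h1]
  exact qP_fix_ge m n Hm (by omega)

lemma sl_bot {j : ℕ} (hn : 1 ≤ n) : sl m n (n-1) j = n + j := by
  rw [sl]
  have h1 : (n-1) + j + 1 = n + j := by omega
  rw [h1]
  exact qP'_fix_ge m n Hm (by omega)

omit Hm in
lemma wl_west {i : ℕ} (hi : i < n) : wl m n i 0 = wp (wordD m n) i := by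
  have hw : wp (wordD m n) = qP' m n i 0 * wp (restW m n i) := by
    rw [word_row0 m n hi, wp_append, wp_append, wp_if, qP', qP]
  rw [hw, Equiv.Perm.mul_apply, wl]
  have hfix : wp (restW m n i) i = i := by
    apply wp_apply_of_fix
    intro a ha
    obtain ⟨r, c, hr, hm, rfl⟩ := mem_restW m n ha
    omega
  rw [hfix, Nat.add_zero]

lemma wordD_letter_bound {a : ℕ} (h : a ∈ wordD m n) : a + 2 ≤ n := by
  obtain ⟨i, j, hm, rfl⟩ := mem_wordD m n h
  exact Hm i j hm

end Labels

end PDproof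
namespace PDproof

section MainInduction

variable (m : ℕ → ℕ → Bool) (n : ℕ)
variable (Hm : ∀ a b, m a b = true → a + b + 2 ≤ n)
variable (Hsym : ∀ a b, m a b = m b a)
variable (Hζ : ∀ x, wp (wordD m n) (wp (wordD m n) x) = x)

include Hm

lemma zeta_fix_ge {x : ℕ} (hx : n ≤ x) : wp (wordD m n) x = x := by
  apply wp_apply_of_fix
  intro a ha
  have := wordD_letter_bound m n Hm ha
  omega

include Hsym Hζ

lemma main_phi : ∀ μ i j, i < n → j < n → i + (n - 1 - j) = μ →
    wl m n i j = wp (wordD m n) (nl m n j i) ∧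
    sl m n i j = wp (wordD m n) (el m n j i) := by
  intro μ
  induction μ using Nat.strong_induction_on with
  | _ μ ih =>
    intro i j hi hj hμ
    have hn1 : 1 ≤ n := by omega
    -- K_N : the north input of cell (i,j)
    have KN : nl m n i j = wp (wordD m n) (wl m n j i) := by
      match i, hi with
      | 0, hi =>
        rw [nl_top, wl_west m n hj, Hζ j]
      | (i'+1), hi =>
        have hmeas : i' + (n - 1 - j) < μ := by omega
        have hIH := (ih _ hmeas i' j (by omega) hj rfl).2
        rw [G2 m n hj, hIH, el_eq_wl_succ m n hi]
    -- K_E : the east input of cell (i,j)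
    have KE : el m n i j = wp (wordD m n) (sl m n j i) := by
      by_cases hjn : j + 1 < n
      · have hmeas : i + (n - 1 - (j+1)) < μ := by omega
        have hIH := (ih _ hmeas i (j+1) hi hjn rfl).1
        rw [el_eq_wl_succ m n hjn, hIH, G2 m n hi]
      · have hj1 : j = n - 1 := by omega
        subst hj1
        rw [el_east m n Hm hn1, sl_bot m n Hm hn1,
          zeta_fix_ge m n Hm (by omega), Nat.add_comm]
    by_cases hm : m i j = true
    · have hm' : m j i = true := by rw [Hsym j i]; exact hm
      constructor
      · rw [cross_wl m n hm, KE, cross_sl m n hm']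
      · rw [cross_sl m n hm, KN, cross_wl m n hm']
    · have hmf : m i j = false := by simpa using hm
      have hmf' : m j i = false := by rw [Hsym j i]; exact hmf
      constructor
      · rw [elbow_wl m n hmf, KN, elbow_wl m n hmf']
      · rw [elbow_sl m n hmf, KE, elbow_sl m n hmf']

/-- the crossing pair at the transposed cell is the `ζ`-image of the crossing pair -/
lemma transpose_labels {i j : ℕ} (hi : i < n) (hj : j < n) (hm : m i j = true) :
    nl m n j i = wp (wordD m n) (el m n i j) ∧
    el m n j i = wp (wordD m n) (nl m n i j) := by
  have hm' : m j i = true := by rw [Hsym j i]; exact hm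
  have h1 := main_phi m n Hm Hsym Hζ (i + (n - 1 - j)) i j hi hj rfl
  constructor
  · -- from Φ(i,j).1 : wl i j = ζ (nl j i) and wl i j = el i j
    have := h1.1
    rw [cross_wl m n hm] at this
    rw [this, Hζ]
  · have := h1.2
    rw [cross_sl m n hm] at this
    rw [this, Hζ]

end MainInduction

end PDproof
namespace PDproof

lemma wp_delete_two (l1 mid l3 : List ℕ) (a b : ℕ)
    (h : wp l1 * sN a * (wp l1)⁻¹
       = wp (l1 ++ a :: mid) * sN b * (wp (l1 ++ a :: mid))⁻¹) :
    wp (l1 ++ a :: (mid ++ b :: l3)) = wp (l1 ++ mid ++ l3) := by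
  have hP : wp (l1 ++ a :: mid) = wp l1 * sN a * wp mid := by
    rw [wp_append, wp_cons, mul_assoc]
  rw [hP] at h
  have hb : sN b = (wp l1 * sN a * wp mid)⁻¹ * (wp l1 * sN a * (wp l1)⁻¹)
      * (wp l1 * sN a * wp mid) := by
    rw [h]; group
  have e : wp l1 * (sN a * (wp mid * (sN b * wp l3)))
      = wp l1 * (sN a * sN a) * (wp mid * wp l3) := by
    rw [hb]; group
  simp only [wp_append, wp_cons]
  rw [e, sN_mul_self, mul_one, mul_assoc]

section Inject

variable (m : ℕ → ℕ → Bool) (n : ℕ)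

/-- the crossing transposition at cell `(i,j)` -/
noncomputable def Tc (i j : ℕ) : Equiv.Perm ℕ :=
  qP m n i j * sN (i+j) * (qP m n i j)⁻¹

lemma Tc_eq_swap (i j : ℕ) : Tc m n i j = Equiv.swap (nl m n i j) (el m n i j) := by
  rw [Tc, nl, el, sN]
  exact (Equiv.swap_apply_apply (qP m n i j) (i+j) (i+j+1)).symm

/-- reading order on cells -/
def cellLT (p q : ℕ × ℕ) : Prop := p.1 < q.1 ∨ (p.1 = q.1 ∧ q.2 < p.2)

lemma pref_extend {i j i' j' : ℕ} (h : cellLT (i,j) (i',j')) (hm : m i j = true)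
    (hj : j < n) :
    ∃ mid, prefW m n i' j' = prefW m n i j ++ (i+j) :: mid := by
  rcases h with h | ⟨rfl, h⟩
  · -- i < i'
    have hrow : rowW m n i = (rowGT (m i) j n).map (i + ·)
        ++ ((i+j) :: (rowL (m i) j).map (i + ·)) := by
      rw [rowW, rowL_split hj, List.map_append, rowL, List.map_append, if_map, if_pos hm]
      simp
    have hrange : List.range i' = (List.range i ++ [i])
        ++ (List.range (i' - (i+1))).map ((i+1) + ·) := by
      rw [← List.range_succ]
      have : i' = (i+1) + (i' - (i+1)) := by omega
      conv_lhs => rw [this]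
      exact List.range_add
    refine ⟨(rowL (m i) j).map (i + ·)
      ++ ((List.range (i' - (i+1))).map ((i+1) + ·)).flatMap (rowW m n)
      ++ (rowGT (m i') j' n).map (i' + ·), ?_⟩
    rw [prefW, prefW, hrange, List.flatMap_append, List.flatMap_append,
      List.flatMap_cons, List.flatMap_nil, List.append_nil, hrow]
    simp [List.append_assoc]
  · -- same row, j' < j
    obtain ⟨mid0, hmid0⟩ := rowGT_split_gen h hj hm
    refine ⟨mid0.map (i + ·), ?_⟩
    rw [prefW, prefW, hmid0, List.map_append]
    simp [List.append_assoc]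

variable (Hm : ∀ a b, m a b = true → a + b + 2 ≤ n)
variable (HRed : ∀ l' : List ℕ, IsWord n l' → wordProd n l' = wordProd n (wordD m n) →
    (wordD m n).length ≤ l'.length)

include Hm HRed

lemma Tc_inj_aux {i j i' j' : ℕ} (hlt : cellLT (i,j) (i',j'))
    (hm : m i j = true) (hm' : m i' j' = true) :
    Tc m n i j ≠ Tc m n i' j' := by
  intro heq
  have hi : i < n := by have := Hm i j hm; omega
  have hj : j < n := by have := Hm i j hm; omega
  have hi' : i' < n := by have := Hm i' j' hm'; omega
  have hj' : j' < n := by have := Hm i' j' hm'; omega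
  obtain ⟨mid, hpre⟩ := pref_extend m n hlt hm hj
  have hw1 : wordD m n = prefW m n i j ++ (i+j) :: suffW m n i j :=
    word_decomp m n hm hi hj
  have hw2 : wordD m n = prefW m n i' j' ++ (i'+j') :: suffW m n i' j' :=
    word_decomp m n hm' hi' hj'
  have hsuf : suffW m n i j = mid ++ (i'+j') :: suffW m n i' j' := by
    have : prefW m n i j ++ (i+j) :: suffW m n i j
        = prefW m n i j ++ (i+j) :: (mid ++ (i'+j') :: suffW m n i' j') := by
      rw [← hw1, hw2, hpre]
      simp [List.append_assoc]
    have := List.append_cancel_left this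
    exact List.tail_eq_of_cons_eq this
  have hword : wordD m n
      = prefW m n i j ++ (i+j) :: (mid ++ (i'+j') :: suffW m n i' j') := by
    rw [hw1, hsuf]
  -- apply the deletion lemma
  have hQ' : qP m n i' j' = wp (prefW m n i j ++ (i+j) :: mid) := by
    rw [qP, hpre]
  have hdel : wp (wordD m n) = wp (prefW m n i j ++ mid ++ suffW m n i' j') := by
    rw [hword]
    apply wp_delete_two
    rw [← hQ']
    exact heq
  -- contradiction with minimality
  set l2 := prefW m n i j ++ mid ++ suffW m n i' j' with hl2
  have hmemw : ∀ x ∈ l2, x ∈ wordD m n := by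
    intro x hx
    rw [hl2] at hx
    rcases List.mem_append.mp hx with hx | hx
    · rcases List.mem_append.mp hx with hx | hx
      · rw [hword]; simp [hx]
      · rw [hword]
        simp only [List.mem_append, List.mem_cons]
        right; right; left; exact hx
    · rw [hw2]; simp [hx]
  have hWw : IsWord n (wordD m n) := by
    intro a ha
    have := wordD_letter_bound m n Hm ha
    omega
  have hW2 : IsWord n l2 := fun a ha => hWw a (hmemw a ha)
  have hprod : wordProd n l2 = wordProd n (wordD m n) :=
    wordProd_eq_of_wp_eq n l2 (wordD m n) hW2 hWw hdel.symm
  have hlen := HRed l2 hW2 hprod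
  rw [hword, hl2] at hlen
  simp only [List.length_append, List.length_cons] at hlen
  omega

lemma Tc_inj {i j i' j' : ℕ} (hne : (i, j) ≠ (i', j'))
    (hm : m i j = true) (hm' : m i' j' = true) :
    Tc m n i j ≠ Tc m n i' j' := by
  rcases Nat.lt_trichotomy i i' with h | h | h
  · exact Tc_inj_aux m n Hm HRed (Or.inl h) hm hm'
  · subst h
    rcases Nat.lt_trichotomy j j' with h2 | h2 | h2
    · intro heq
      exact Tc_inj_aux m n Hm HRed (i := i) (j := j') (i' := i) (j' := j)
        (Or.inr ⟨rfl, h2⟩) hm' hm heq.symm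
    · exact absurd (by rw [h2]) hne
    · exact Tc_inj_aux m n Hm HRed (Or.inr ⟨rfl, h2⟩) hm hm'
  · intro heq
    exact Tc_inj_aux m n Hm HRed (Or.inl h) hm' hm heq.symm

end Inject

end PDproof
namespace PDproof

open scoped Classical in
/-- number of crossings of a given transposition along a word, starting from state `σ` -/
noncomputable def cntSwap : List ℕ → Equiv.Perm ℕ → Equiv.Perm ℕ → ℕ
  | [], _, _ => 0
  | a :: l, σ, t => (if σ * sN a * σ⁻¹ = t then 1 else 0) + cntSwap l (σ * sN a) t

lemma sN_lt_iff_of_not {a p q : ℕ} (hpq : p ≠ q)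
    (h : ¬((p = a ∧ q = a+1) ∨ (p = a+1 ∧ q = a))) :
    (sN a p < sN a q) ↔ (p < q) := by
  rw [sN, Equiv.swap_apply_def, Equiv.swap_apply_def]
  split_ifs <;> omega

lemma sN_swap_pair {a p q : ℕ}
    (h : (p = a ∧ q = a+1) ∨ (p = a+1 ∧ q = a)) :
    sN a p = q ∧ sN a q = p := by
  rcases h with ⟨rfl, rfl⟩ | ⟨rfl, rfl⟩
  · exact ⟨Equiv.swap_apply_left _ _, Equiv.swap_apply_right _ _⟩
  · exact ⟨Equiv.swap_apply_right _ _, Equiv.swap_apply_left _ _⟩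

lemma conj_eq_swap_iff (σ : Equiv.Perm ℕ) (a c d : ℕ) (hcd : c ≠ d) :
    σ * sN a * σ⁻¹ = Equiv.swap c d
      ↔ ((σ⁻¹ c = a ∧ σ⁻¹ d = a+1) ∨ (σ⁻¹ c = a+1 ∧ σ⁻¹ d = a)) := by
  rw [sN]
  rw [show σ * Equiv.swap a (a+1) * σ⁻¹ = Equiv.swap (σ a) (σ (a+1)) from
    (Equiv.swap_apply_apply σ a (a+1)).symm]
  constructor
  · intro h
    have hne : σ a ≠ σ (a+1) := fun hc => by
      have := σ.injective hc; omega
    rcases swap_eq_swap_iff' hne h with ⟨h1, h2⟩ | ⟨h1, h2⟩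
    · left
      constructor
      · rw [← h1, Equiv.Perm.inv_apply_self]
      · rw [← h2, Equiv.Perm.inv_apply_self]
    · right
      constructor
      · rw [← h2, Equiv.Perm.inv_apply_self]
      · rw [← h1, Equiv.Perm.inv_apply_self]
  · intro h
    rcases h with ⟨h1, h2⟩ | ⟨h1, h2⟩
    · have e1 : σ a = c := by rw [← h1, Equiv.Perm.apply_inv_self]
      have e2 : σ (a+1) = d := by rw [← h2, Equiv.Perm.apply_inv_self]
      rw [e1, e2]
    · have e1 : σ a = d := by rw [← h2, Equiv.Perm.apply_inv_self]
      have e2 : σ (a+1) = c := by rw [← h1, Equiv.Perm.apply_inv_self]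
      rw [e1, e2, Equiv.swap_comm]

lemma parity_lemma (c d : ℕ) (hcd : c ≠ d) :
    ∀ (l : List ℕ) (σ : Equiv.Perm ℕ),
    Even (cntSwap l σ (Equiv.swap c d))
      ↔ (((σ * wp l)⁻¹ c < (σ * wp l)⁻¹ d) ↔ (σ⁻¹ c < σ⁻¹ d)) := by
  intro l
  induction l with
  | nil =>
    intro σ
    simp [cntSwap]
  | cons a l ih =>
    intro σ
    have hIH := ih (σ * sN a)
    have hw : σ * wp (a :: l) = (σ * sN a) * wp l := by
      rw [wp_cons, mul_assoc]
    have hinv : ((σ * sN a)⁻¹ : Equiv.Perm ℕ) = sN a * σ⁻¹ := by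
      rw [mul_inv_rev, sN, Equiv.swap_inv]
    have hp : ((σ * sN a)⁻¹ c : ℕ) = sN a (σ⁻¹ c) := by rw [hinv]; rfl
    have hq : ((σ * sN a)⁻¹ d : ℕ) = sN a (σ⁻¹ d) := by rw [hinv]; rfl
    have hpq : σ⁻¹ c ≠ σ⁻¹ d := fun hc => hcd (by
      have := congrArg σ hc
      rwa [Equiv.Perm.apply_inv_self, Equiv.Perm.apply_inv_self] at this)
    rw [cntSwap, hw]
    by_cases hcond : σ * sN a * σ⁻¹ = Equiv.swap c d
    · rw [if_pos hcond]
      have hpair := (conj_eq_swap_iff σ a c d hcd).mp hcond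
      have hsw := sN_swap_pair hpair
      have hflip : ((σ * sN a)⁻¹ c < (σ * sN a)⁻¹ d) ↔ ¬(σ⁻¹ c < σ⁻¹ d) := by
        rw [hp, hq, hsw.1, hsw.2]
        omega
      rw [Nat.even_add, hIH, hflip]
      have h1 : ¬ Even 1 := Nat.not_even_one
      tauto
    · rw [if_neg hcond, zero_add, hIH]
      have hpair := fun h => hcond ((conj_eq_swap_iff σ a c d hcd).mpr h)
      have hsame : ((σ * sN a)⁻¹ c < (σ * sN a)⁻¹ d) ↔ (σ⁻¹ c < σ⁻¹ d) := by
        rw [hp, hq]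
        exact sN_lt_iff_of_not hpq (by tauto)
      rw [hsame]

lemma cntSwap_ne_zero {t : Equiv.Perm ℕ} :
    ∀ (l : List ℕ) (σ : Equiv.Perm ℕ), cntSwap l σ t ≠ 0 →
    ∃ l1 a l2, l = l1 ++ a :: l2 ∧ (σ * wp l1) * sN a * (σ * wp l1)⁻¹ = t := by
  intro l
  induction l with
  | nil => intro σ h; exact absurd rfl h
  | cons a l ih =>
    intro σ h
    by_cases hcond : σ * sN a * σ⁻¹ = t
    · refine ⟨[], a, l, rfl, ?_⟩
      simpa using hcond
    · rw [cntSwap, if_neg hcond, zero_add] at h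
      obtain ⟨l1, b, l2, hl, ht⟩ := ih (σ * sN a) h
      refine ⟨a :: l1, b, l2, by rw [hl]; rfl, ?_⟩
      have hx : σ * wp (a :: l1) = (σ * sN a) * wp l1 := by rw [wp_cons, mul_assoc]
      rw [hx]
      exact ht

end PDproof
namespace PDproof

lemma pos_row {mm : ℕ → Bool} {i : ℕ} :
    ∀ (k : ℕ) (l1 : List ℕ) (a : ℕ) (l2 : List ℕ),
    (rowL mm k).map (i + ·) = l1 ++ a :: l2 →
    ∃ j, mm j = true ∧ j < k ∧ a = i + j ∧ l1 = (rowGT mm j k).map (i + ·) := by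
  intro k
  induction k with
  | zero => intro l1 a l2 h; simp [rowL] at h
  | succ k ih =>
    intro l1 a l2 h
    rw [rowL, List.map_append] at h
    by_cases hmk : mm k = true
    · rw [if_pos hmk] at h
      simp only [List.map_cons, List.map_nil, List.singleton_append] at h
      match l1, h with
      | [], h =>
        have h1 : a = i + k := (List.cons_eq_cons.mp h).1.symm
        refine ⟨k, hmk, Nat.lt_succ_self k, h1, ?_⟩
        rw [rowGT, if_neg (fun hc : k < k ∧ mm k = true => absurd hc.1 (by omega)),
          rowGT_nil (le_refl k)]
        rfl
      | x :: l1', h =>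
        obtain ⟨hx, h'⟩ := List.cons_eq_cons.mp h
        obtain ⟨j, hj1, hj2, hj3, hj4⟩ := ih l1' a l2 h'
        refine ⟨j, hj1, Nat.lt_succ_of_lt hj2, hj3, ?_⟩
        rw [rowGT, if_pos ⟨hj2, hmk⟩, List.map_append, hj4, ← hx]
        rfl
    · rw [if_neg hmk] at h
      simp only [List.map_nil, List.nil_append] at h
      obtain ⟨j, hj1, hj2, hj3, hj4⟩ := ih l1 a l2 h
      refine ⟨j, hj1, Nat.lt_succ_of_lt hj2, hj3, ?_⟩
      rw [rowGT, if_neg (by tauto), hj4]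
      rfl

lemma pos_roww (m : ℕ → ℕ → Bool) (n N : ℕ) {l1 : List ℕ} {a : ℕ} {l2 : List ℕ}
    (h : rowW m n N = l1 ++ a :: l2) :
    ∃ j, m N j = true ∧ j < n ∧ a = N + j ∧ l1 = (rowGT (m N) j n).map (N + ·) := by
  rw [rowW] at h
  exact pos_row n l1 a l2 h

lemma pos_word (m : ℕ → ℕ → Bool) (n : ℕ) :
    ∀ (N : ℕ) (l1 : List ℕ) (a : ℕ) (l2 : List ℕ),
    (List.range N).flatMap (rowW m n) = l1 ++ a :: l2 →
    ∃ i j, i < N ∧ j < n ∧ m i j = true ∧ a = i + j ∧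
      l1 = (List.range i).flatMap (rowW m n) ++ (rowGT (m i) j n).map (i + ·) := by
  intro N
  induction N with
  | zero => intro l1 a l2 h; simp at h
  | succ N ih =>
    intro l1 a l2 h
    rw [List.range_succ, List.flatMap_append, List.flatMap_cons, List.flatMap_nil,
      List.append_nil] at h
    rcases List.append_eq_append_iff.mp h with ⟨w, hw1, hw2⟩ | ⟨w, hw1, hw2⟩
    · -- l1 = flatMap ++ w  and rowW N = w ++ a :: l2
      obtain ⟨j, hj1, hj2, hj3, hj4⟩ := pos_roww m n N hw2
      exact ⟨N, j, Nat.lt_succ_self N, hj2, hj1, hj3, by rw [hw1, hj4]⟩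
    · -- flatMap = l1 ++ w and a :: l2 = w ++ rowW N
      match w, hw2 with
      | [], hw2 =>
        rw [List.append_nil] at hw1
        have hrw : rowW m n N = [] ++ a :: l2 := by
          rw [List.nil_append] at hw2 ⊢
          exact hw2.symm
        obtain ⟨j, hj1, hj2, hj3, hj4⟩ := pos_roww m n N hrw
        exact ⟨N, j, Nat.lt_succ_self N, hj2, hj1, hj3, by
          rw [← hw1, ← hj4, List.append_nil]⟩
      | x :: w', hw2 =>
        obtain ⟨hx, hw2'⟩ := List.cons_eq_cons.mp hw2
        subst hx
        have hsplit : (List.range N).flatMap (rowW m n) = l1 ++ a :: w' := by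
          rw [hw1]
        obtain ⟨i, j, hi, hj, hm, ha, hl⟩ := ih l1 a w' hsplit
        exact ⟨i, j, Nat.lt_succ_of_lt hi, hj, hm, ha, hl⟩

lemma pos_cell (m : ℕ → ℕ → Bool) (n : ℕ) {l1 : List ℕ} {a : ℕ} {l2 : List ℕ}
    (h : wordD m n = l1 ++ a :: l2) :
    ∃ i j, i < n ∧ j < n ∧ m i j = true ∧ a = i + j ∧ l1 = prefW m n i j := by
  obtain ⟨i, j, hi, hj, hm, ha, hl⟩ := pos_word m n n l1 a l2 h
  exact ⟨i, j, hi, hj, hm, ha, hl⟩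

section Exist

variable (m : ℕ → ℕ → Bool) (n : ℕ)
variable (Hζ2 : wp (wordD m n) * wp (wordD m n) = 1)

include Hζ2

lemma exists_cell_of_inversion {c d : ℕ} (hcd : c < d)
    (hinv : wp (wordD m n) d < wp (wordD m n) c) :
    ∃ i j, m i j = true ∧ Tc m n i j = Equiv.swap c d := by
  have hinveq : (wp (wordD m n))⁻¹ = wp (wordD m n) :=
    inv_eq_of_mul_eq_one_right Hζ2
  have hpar := parity_lemma c d (by omega) (wordD m n) 1
  rw [one_mul, inv_one] at hpar
  simp only [Equiv.Perm.one_apply] at hpar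
  rw [hinveq] at hpar
  have hfalse : ¬ (wp (wordD m n) c < wp (wordD m n) d ↔ c < d) := by
    intro hc
    have := hc.mpr hcd
    omega
  have hodd : ¬ Even (cntSwap (wordD m n) 1 (Equiv.swap c d)) := fun he =>
    hfalse (hpar.mp he)
  have hne : cntSwap (wordD m n) 1 (Equiv.swap c d) ≠ 0 := by
    intro h0
    rw [h0] at hodd
    exact hodd Even.zero
  obtain ⟨l1, a, l2, hl, ht⟩ := cntSwap_ne_zero (wordD m n) 1 hne
  rw [one_mul] at ht
  obtain ⟨i, j, hi, hj, hm, ha, hpre⟩ := pos_cell m n hl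
  refine ⟨i, j, hm, ?_⟩
  rw [Tc, qP, ← hpre, ← ha]
  exact ht

end Exist

end PDproof
namespace PDproof

lemma rowL_eq_filter (mm : ℕ → Bool) : ∀ k, rowL mm k = (List.range k).reverse.filter mm := by
  intro k
  induction k with
  | zero => rfl
  | succ k ih =>
    rw [rowL, List.range_succ, List.reverse_append, List.filter_append, ih]
    congr 1
    by_cases h : mm k = true <;> simp [h]

lemma flatMap_congr {α β : Type*} (l : List α) {f g : α → List β}
    (h : ∀ a ∈ l, f a = g a) : l.flatMap f = l.flatMap g := by
  induction l with
  | nil => rfl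
  | cons a l ih =>
    rw [List.flatMap_cons, List.flatMap_cons, h a (by simp),
      ih (fun b hb => h b (by simp [hb]))]

lemma flatMap_single {α β : Type*} (l : List α) (f : α → β) :
    (l.flatMap fun a => [f a]) = l.map f := by
  induction l with
  | nil => rfl
  | cons a l ih => simp [ih]

lemma qP_lt_n (m : ℕ → ℕ → Bool) (n : ℕ) (Hm : ∀ a b, m a b = true → a + b + 2 ≤ n)
    {i j x : ℕ} (hx : x < n) : qP m n i j x < n := by
  rw [qP]
  apply wp_apply_lt
  · intro a ha
    obtain ⟨r, c, hm, rfl⟩ := mem_prefW m n ha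
    have := Hm r c hm
    omega
  · exact hx

end PDproof

/-- bridge: `readWord` equals the `PDproof` reading word -/
lemma readWord_eq_wordD (n : ℕ) (D : Finset (Fin n × Fin n)) :
    readWord n D
      = PDproof.wordD
          (fun i j => decide ((i, j) ∈ D.image (fun p => ((p.1 : ℕ), (p.2 : ℕ))))) n := by
  set m : ℕ → ℕ → Bool :=
    fun i j => decide ((i, j) ∈ D.image (fun p => ((p.1 : ℕ), (p.2 : ℕ)))) with hm
  rw [readWord, PDproof.wordD, ← List.map_coe_finRange n, List.flatMap_map]
  apply PDproof.flatMap_congr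
  intro i _
  show ((List.finRange n).reverse.filter (fun j => (i, j) ∈ D)).map
      (fun j => (i : ℕ) + (j : ℕ)) = PDproof.rowW m n (i : ℕ)
  rw [PDproof.rowW, PDproof.rowL_eq_filter, ← List.map_coe_finRange n,
    ← List.map_reverse, List.filter_map, List.map_map]
  have hfil : (List.finRange n).reverse.filter (fun j => (i, j) ∈ D)
      = (List.finRange n).reverse.filter ((m (i : ℕ)) ∘ Fin.val) := by
    apply List.filter_congr
    intro j _
    simp only [Function.comp_apply, hm]
    rw [decide_eq_decide]
    constructor
    · intro h
      exact Finset.mem_image_of_mem _ h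
    · intro h
      obtain ⟨p, hp, hpe⟩ := Finset.mem_image.mp h
      have h1 : (p.1 : ℕ) = (i : ℕ) := (Prod.ext_iff.mp hpe).1
      have h2 : (p.2 : ℕ) = (j : ℕ) := (Prod.ext_iff.mp hpe).2
      have : p = (i, j) := Prod.ext (Fin.ext h1) (Fin.ext h2)
      rwa [← this]
  rw [hfil]
  simp [Function.comp, PDproof.flatMap_single, List.map_map, List.map_reverse]

/-- For `n` even and an involution `z` with a symmetric reduced pipe dream `D`:
`z` is fixed-point-free iff `D` contains all diagonal cells `(i,i)` for
`i ∈ [n/2]`. -/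
theorem fpf_iff_diagonal_in_symmetric_pipe_dream (n : ℕ) (hn : Even n)
    (z : Equiv.Perm (Fin n)) (hz : z⁻¹ = z)
    (D : Finset (Fin n × Fin n)) (hD : IsPipeDream n D z)
    (hsym : trFinset n D = D) :
    (∀ i : Fin n, z i ≠ i) ↔ (∀ i : Fin n, (i : ℕ) < n / 2 → (i, i) ∈ D) := by
  classical
  open PDproof in
  obtain ⟨k, hk⟩ := hn
  set Dn : Finset (ℕ × ℕ) := D.image (fun p => ((p.1 : ℕ), (p.2 : ℕ))) with hDndef
  set m : ℕ → ℕ → Bool := fun i j => decide ((i, j) ∈ Dn) with hmdef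
  have hmem : ∀ i j : ℕ, m i j = true ↔ (i, j) ∈ Dn := by
    intro i j; simp [hmdef]
  have hmemD : ∀ i j : Fin n, (m (i : ℕ) (j : ℕ) = true ↔ (i, j) ∈ D) := by
    intro i j
    rw [hmem, hDndef]
    constructor
    · intro h
      obtain ⟨p, hp, hpe⟩ := Finset.mem_image.mp h
      have h1 : (p.1 : ℕ) = (i : ℕ) := (Prod.ext_iff.mp hpe).1
      have h2 : (p.2 : ℕ) = (j : ℕ) := (Prod.ext_iff.mp hpe).2
      have hpij : p = (i, j) := Prod.ext (Fin.ext h1) (Fin.ext h2)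
      rwa [← hpij]
    · intro h
      exact Finset.mem_image_of_mem _ h
  have Hm : ∀ a b, m a b = true → a + b + 2 ≤ n := by
    intro a b h
    rw [hmem, hDndef] at h
    obtain ⟨p, hp, hpe⟩ := Finset.mem_image.mp h
    have h1 : (p.1 : ℕ) = a := (Prod.ext_iff.mp hpe).1
    have h2 : (p.2 : ℕ) = b := (Prod.ext_iff.mp hpe).2
    have := hD.1 p hp
    omega
  have hsym1 : ∀ x y : ℕ, (x, y) ∈ Dn → (y, x) ∈ Dn := by
    intro x y h
    rw [hDndef] at h ⊢
    obtain ⟨p, hp, hpe⟩ := Finset.mem_image.mp h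
    have htr : (p.2, p.1) ∈ trFinset n D := Finset.mem_image_of_mem _ hp
    rw [hsym] at htr
    refine Finset.mem_image.mpr ⟨(p.2, p.1), htr, ?_⟩
    have h1 : (p.1 : ℕ) = x := (Prod.ext_iff.mp hpe).1
    have h2 : (p.2 : ℕ) = y := (Prod.ext_iff.mp hpe).2
    simp [h1, h2]
  have Hsym : ∀ a b, m a b = m b a := by
    intro a b
    rw [hmdef]
    simp only
    rw [decide_eq_decide]
    exact ⟨hsym1 a b, hsym1 b a⟩
  have hread : readWord n D = wordD m n := by
    rw [hmdef, hDndef]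
    exact readWord_eq_wordD n D
  have hWord : IsWord n (wordD m n) := by rw [← hread]; exact hD.2.1
  have hProd : wordProd n (wordD m n) = z := by rw [← hread]; exact hD.2.2.1
  have HRed : ∀ l' : List ℕ, IsWord n l' → wordProd n l' = wordProd n (wordD m n) →
      (wordD m n).length ≤ l'.length := by
    intro l' h1 h2
    rw [← hread]
    exact hD.2.2.2 l' h1 (by rw [h2, hProd])
  -- the global permutation
  have hagree : ∀ x : Fin n, (z x : ℕ) = wp (wordD m n) (x : ℕ) := by
    intro x
    rw [← hProd]
    exact wordProd_apply_eq_wp n _ hWord x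
  have hzfix : ∀ x : Fin n, z (z x) = x := by
    intro x
    have := Equiv.Perm.inv_apply_self z x
    rwa [hz] at this
  have Hζ : ∀ x, wp (wordD m n) (wp (wordD m n) x) = x := by
    intro x
    by_cases hx : x < n
    · have h1 : wp (wordD m n) (x : ℕ) = (z ⟨x, hx⟩ : ℕ) := (hagree ⟨x, hx⟩).symm
      rw [h1, ← hagree (z ⟨x, hx⟩), hzfix]
    · have h1 : wp (wordD m n) x = x := zeta_fix_ge m n Hm (by omega)
      rw [h1, h1]
  have Hζ2 : wp (wordD m n) * wp (wordD m n) = 1 := by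
    apply Equiv.ext
    intro x
    simp [Equiv.Perm.mul_apply, Hζ x]
  have hdia_lt : ∀ i : ℕ, m i i = true → i < n / 2 := by
    intro i h
    have := Hm i i h
    omega
  -- diagonal cells give two-cycles
  have hdiag2 : ∀ i : ℕ, m i i = true →
      el m n i i = wp (wordD m n) (nl m n i i) ∧ nl m n i i < n ∧
        nl m n i i ≠ el m n i i := by
    intro i h
    have hi : i < n := by have := Hm i i h; omega
    have htr := transpose_labels m n Hm Hsym Hζ hi hi h
    refine ⟨htr.2, ?_, ?_⟩
    · rw [nl]
      exact qP_lt_n m n Hm (by have := Hm i i h; omega)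
    · rw [nl, el]
      exact (qP m n i i).injective.ne (by omega)
  set movedF : Finset (Fin n) := Finset.univ.filter (fun c => z c ≠ c) with hmovedF
  set TC : Finset (Equiv.Perm ℕ) :=
    movedF.image (fun c : Fin n => Equiv.swap (c : ℕ) (wp (wordD m n) (c : ℕ))) with hTCdef
  set Dg : Finset ℕ := (Finset.range (n/2)).filter (fun i => m i i) with hDgdef
  -- moved value facts
  have hmovedval : ∀ c : Fin n, z c ≠ c → wp (wordD m n) (c : ℕ) ≠ (c : ℕ) := by
    intro c h hx
    apply h
    apply Fin.ext
    rw [hagree c, hx]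
  -- CARD 1 : |Dg| = |TC|
  have hcard1 : Dg.card = TC.card := by
    apply Finset.card_bij (fun i _ => Tc m n i i)
    · intro i hi
      have hmii : m i i = true := (Finset.mem_filter.mp hi).2
      obtain ⟨h1, h2, h3⟩ := hdiag2 i hmii
      rw [hTCdef]
      refine Finset.mem_image.mpr ⟨⟨nl m n i i, h2⟩, ?_, ?_⟩
      · rw [hmovedF, Finset.mem_filter]
        refine ⟨Finset.mem_univ _, ?_⟩
        intro hc
        apply h3
        have := congrArg (fun x : Fin n => (x : ℕ)) hc
        simp only at this
        rw [hagree ⟨nl m n i i, h2⟩] at this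
        rw [← h1] at this
        exact this.symm
      · rw [Tc_eq_swap, ← h1]
    · intro i hi i' hi' heq
      by_contra hne
      exact Tc_inj m n Hm HRed
        (show (i, i) ≠ (i', i') from fun hc => hne (congrArg Prod.fst hc))
        (Finset.mem_filter.mp hi).2 (Finset.mem_filter.mp hi').2 heq
    · intro t ht
      rw [hTCdef] at ht
      obtain ⟨c, hc, rfl⟩ := Finset.mem_image.mp ht
      have hcmoved : z c ≠ c := by
        rw [hmovedF] at hc
        exact (Finset.mem_filter.mp hc).2
      have hvne : wp (wordD m n) (c : ℕ) ≠ (c : ℕ) := hmovedval c hcmoved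
      have hexists : ∃ i j, m i j = true ∧
          Tc m n i j = Equiv.swap (c : ℕ) (wp (wordD m n) (c : ℕ)) := by
        rcases lt_or_gt_of_ne hvne with hlt | hlt
        · -- ζ c < c : inversion pair (ζ c, c)
          obtain ⟨i, j, hm', ht'⟩ := exists_cell_of_inversion m n Hζ2 hlt
            (by rw [Hζ]; exact hlt)
          exact ⟨i, j, hm', by rw [ht', Equiv.swap_comm]⟩
        · obtain ⟨i, j, hm', ht'⟩ := exists_cell_of_inversion m n Hζ2 hlt
            (by rw [Hζ]; exact hlt)
          exact ⟨i, j, hm', ht'⟩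
      obtain ⟨i, j, hmij, hTij⟩ := hexists
      have hi : i < n := by have := Hm i j hmij; omega
      have hj : j < n := by have := Hm i j hmij; omega
      have htrans := transpose_labels m n Hm Hsym Hζ hi hj hmij
      have hnlne : nl m n i j ≠ el m n i j := by
        rw [nl, el]
        exact (qP m n i j).injective.ne (by omega)
      have hTji : Tc m n j i = Tc m n i j := by
        rw [Tc_eq_swap, Tc_eq_swap, htrans.1, htrans.2]
        rw [Tc_eq_swap] at hTij
        rcases swap_eq_swap_iff' hnlne hTij with ⟨e1, e2⟩ | ⟨e1, e2⟩
        · rw [e1, e2, Hζ, Equiv.swap_comm]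
        · rw [e1, e2, Hζ, Equiv.swap_comm]
      have hij : i = j := by
        by_contra hne
        have hmji : m j i = true := by rw [Hsym j i]; exact hmij
        exact Tc_inj m n Hm HRed
          (show (j, i) ≠ (i, j) from fun hc => hne ((Prod.ext_iff.mp hc).1.symm))
          hmji hmij hTji
      subst hij
      exact ⟨i, by
        rw [hDgdef]
        exact Finset.mem_filter.mpr ⟨Finset.mem_range.mpr (hdia_lt i hmij), hmij⟩, hTij⟩
  -- CARD 2 : |moved| = 2 |TC|
  have hcard2 : movedF.card = 2 * TC.card := by
    rw [Finset.card_eq_sum_card_fiberwise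
      (f := fun c : Fin n => Equiv.swap (c : ℕ) (wp (wordD m n) (c : ℕ)))
      (t := TC) (fun c hc => by rw [hTCdef]; exact Finset.mem_image_of_mem _ hc)]
    have hfib : ∀ t ∈ TC,
        (movedF.filter (fun c : Fin n =>
          Equiv.swap (c : ℕ) (wp (wordD m n) (c : ℕ)) = t)).card = 2 := by
      intro t ht
      rw [hTCdef] at ht
      obtain ⟨c, hc, rfl⟩ := Finset.mem_image.mp ht
      have hcmoved : z c ≠ c := by
        rw [hmovedF] at hc
        exact (Finset.mem_filter.mp hc).2
      have hvne : wp (wordD m n) (c : ℕ) ≠ (c : ℕ) := hmovedval c hcmoved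
      have hzcval : ((z c : Fin n) : ℕ) = wp (wordD m n) (c : ℕ) := hagree c
      have hczc : c ≠ z c := by
        intro h
        exact hcmoved (by rw [← h])
      have hfeq : movedF.filter (fun d : Fin n =>
          Equiv.swap (d : ℕ) (wp (wordD m n) (d : ℕ))
            = Equiv.swap (c : ℕ) (wp (wordD m n) (c : ℕ))) = {c, z c} := by
        ext d
        simp only [Finset.mem_filter, Finset.mem_insert, Finset.mem_singleton]
        constructor
        · rintro ⟨hdm, hdeq⟩
          have hdmoved : z d ≠ d := by
            rw [hmovedF] at hdm
            exact (Finset.mem_filter.mp hdm).2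
          have hdvne : (d : ℕ) ≠ wp (wordD m n) (d : ℕ) := (hmovedval d hdmoved).symm
          rcases swap_eq_swap_iff' hdvne hdeq with ⟨e1, e2⟩ | ⟨e1, e2⟩
          · exact Or.inl (Fin.ext e1)
          · right
            apply Fin.ext
            rw [hzcval, ← e1]
        · intro hd
          rcases hd with rfl | rfl
          · exact ⟨hc, rfl⟩
          · constructor
            · rw [hmovedF, Finset.mem_filter]
              refine ⟨Finset.mem_univ _, ?_⟩
              intro hcon
              apply hcmoved
              have h5 := hzfix c
              rw [hcon] at h5
              exact h5
            · rw [hzcval, Hζ, Equiv.swap_comm]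
      rw [hfeq]
      exact Finset.card_pair hczc
    rw [Finset.sum_congr rfl hfib, Finset.sum_const, smul_eq_mul, mul_comm]
  have hn2 : 2 * (n / 2) = n := by omega
  have hndiv : n / 2 = k := by omega
  constructor
  · -- fpf → all diagonal cells present
    intro hfpf i hilt
    have hmu : movedF = Finset.univ := by
      rw [hmovedF]
      apply Finset.eq_univ_iff_forall.mpr
      intro c
      exact Finset.mem_filter.mpr ⟨Finset.mem_univ c, hfpf c⟩
    have hmc : movedF.card = n := by rw [hmu, Finset.card_univ, Fintype.card_fin]
    have hDgc : Dg.card = n / 2 := by omega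
    have hDgsub : Dg ⊆ Finset.range (n / 2) := by
      rw [hDgdef]; exact Finset.filter_subset _ _
    have hDgeq : Dg = Finset.range (n / 2) := by
      apply Finset.eq_of_subset_of_card_le hDgsub
      rw [hDgc, Finset.card_range]
    have hmem2 : (i : ℕ) ∈ Dg := by
      rw [hDgeq]
      exact Finset.mem_range.mpr hilt
    rw [hDgdef] at hmem2
    exact (hmemD i i).mp (Finset.mem_filter.mp hmem2).2
  · -- all diagonal cells present → fpf
    intro hdiag c
    have hDgeq : Dg = Finset.range (n / 2) := by
      apply Finset.Subset.antisymm
      · rw [hDgdef]; exact Finset.filter_subset _ _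
      · intro i hi
        have hilt : i < n / 2 := Finset.mem_range.mp hi
        have hiltn : i < n := by omega
        have hind := hdiag ⟨i, hiltn⟩ hilt
        rw [hDgdef]
        exact Finset.mem_filter.mpr ⟨hi, (hmemD ⟨i, hiltn⟩ ⟨i, hiltn⟩).mpr hind⟩
    have hDgc : Dg.card = n / 2 := by rw [hDgeq, Finset.card_range]
    have hmc : movedF.card = n := by omega
    have hmu : movedF = Finset.univ := by
      apply Finset.eq_of_subset_of_card_le (Finset.subset_univ _)
      rw [hmc, Finset.card_univ, Fintype.card_fin]
    have : c ∈ movedF := by rw [hmu]; exact Finset.mem_univ c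
    rw [hmovedF] at this
    exact (Finset.mem_filter.mp this).2
end
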